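/- Let g(y) = (τ(1−τ)/Γ(α+1,α)) [α + ρ_τ(y)]^α exp{−[α + ρ_τ(y)]} be the standard asymmetric connected double truncated gamma density with shape parameter α > 0 and skewness 0 < τ < 1, with almost-everywhere derivative ġ. For η ∈ ℝ define ξ̇_{(η,1)_η}(y) = −(1/2) ġ(y−η) 1{g(y−η)>0}/√(g(y−η)). Then for every η ∈ ℝ, ∫_{−∞}^{∞} ξ̇²_{(η,1)_η}(y) dy ≤ max{τ², (1−τ)²}/2; in particular ξ̇_{(η,1)_η} is square integrable. -/

import Mathlib

open MeasureTheory

/-- The check loss `ρ_τ(y) = y(τ - 1{y<0})`. -/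
noncomputable def checkLoss (τ y : ℝ) : ℝ := y * (τ - if y < 0 then 1 else 0)

/-- Upper incomplete gamma function `Γ(t,k) = ∫_k^∞ x^{t-1} e^{-x} dx`. -/
noncomputable def uiGamma (t k : ℝ) : ℝ := ∫ x in Set.Ioi k, x ^ (t - 1) * Real.exp (-x)

/-- The standard asymmetric connected double truncated gamma density
`g(y) = (τ(1-τ)/Γ(α+1,α)) [α+ρ_τ(y)]^α exp{-[α+ρ_τ(y)]}`. -/
noncomputable def acdtgDensity (α τ : ℝ) : ℝ → ℝ := fun y =>
  τ * (1 - τ) / uiGamma (α + 1) α * (α + checkLoss τ y) ^ α *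
    Real.exp (-(α + checkLoss τ y))

/-- The candidate location Hellinger derivative
`ξ̇_{(η,1)_η}(y) = -(1/2) ġ(y-η) 1{g(y-η)>0}/√(g(y-η))`. -/
noncomputable def acdtgXi (α τ : ℝ) (gdot : ℝ → ℝ) (η : ℝ) : ℝ → ℝ := fun y =>
  -(1 / 2) * gdot (y - η) * (if 0 < acdtgDensity α τ (y - η) then 1 else 0) /
    Real.sqrt (acdtgDensity α τ (y - η))

/-!
Away from the kink at `0`, `g = c · f(α + ρ_τ)` with `f(x) = x^α e^{-x}` and `f' = (α/x - 1) f`,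
so `ġ = s · g` with score `s = (α/(α + ρ_τ) - 1) · ρ_τ'`. As `0 < α/(α + ρ_τ) ≤ 1` and
`ρ_τ' ∈ {τ - 1, τ}`, `s² ≤ max{τ², (1-τ)²}`, while `ξ̇² = s² g / 4` (shifted by `η`). Integrating
against the probability density `g` gives even the bound `max{τ², (1-τ)²}/4`. The normalisation
`∫ g = 1` comes from the substitutions `x = τ y` on `y > 0` and `x = (1-τ)(-y)` on `y < 0`, which
turn the two halves into `c Γ(α+1, α)/τ` and `c Γ(α+1, α)/(1-τ)`.
-/

open Set Real

section CheckLoss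

variable {τ : ℝ}

noncomputable def checkLossDeriv (τ y : ℝ) : ℝ := τ - if y < 0 then 1 else 0

lemma checkLoss_of_nonneg {y : ℝ} (hy : 0 ≤ y) : checkLoss τ y = τ * y := by
  simp [checkLoss, not_lt.2 hy, mul_comm]

lemma checkLoss_of_nonpos {y : ℝ} (hy : y ≤ 0) : checkLoss τ y = (1 - τ) * -y := by
  rcases hy.lt_or_eq with hy | rfl
  · simp only [checkLoss, if_pos hy]
    ring
  · simp [checkLoss]

lemma checkLoss_nonneg (hτ0 : 0 ≤ τ) (hτ1 : τ ≤ 1) (y : ℝ) : 0 ≤ checkLoss τ y := by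
  rcases le_total 0 y with hy | hy
  · rw [checkLoss_of_nonneg hy]
    exact mul_nonneg hτ0 hy
  · rw [checkLoss_of_nonpos hy]
    exact mul_nonneg (by linarith) (by linarith)

@[fun_prop]
lemma measurable_checkLossDeriv (τ : ℝ) : Measurable (checkLossDeriv τ) :=
  measurable_const.sub (Measurable.ite measurableSet_Iio measurable_const measurable_const)

@[fun_prop]
lemma measurable_checkLoss (τ : ℝ) : Measurable (checkLoss τ) :=
  measurable_id.mul (measurable_checkLossDeriv τ)

lemma hasDerivAt_checkLoss {y : ℝ} (hy : y ≠ 0) :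
    HasDerivAt (checkLoss τ) (checkLossDeriv τ y) y := by
  rcases hy.lt_or_gt with hy | hy
  · have hloc : checkLoss τ =ᶠ[nhds y] fun z => z * (τ - 1) := by
      filter_upwards [gt_mem_nhds hy] with z hz
      simp [checkLoss, hz]
    simpa [checkLossDeriv, hy] using
      ((hasDerivAt_id y).mul_const (τ - 1)).congr_of_eventuallyEq hloc
  · have hloc : checkLoss τ =ᶠ[nhds y] fun z => z * τ := by
      filter_upwards [lt_mem_nhds hy] with z hz
      simp [checkLoss, not_lt.2 hz.le]
    simpa [checkLossDeriv, not_lt.2 hy.le] using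
      ((hasDerivAt_id y).mul_const τ).congr_of_eventuallyEq hloc

lemma sq_checkLossDeriv_le (τ y : ℝ) : checkLossDeriv τ y ^ 2 ≤ max (τ ^ 2) ((1 - τ) ^ 2) := by
  unfold checkLossDeriv
  split_ifs
  · rw [← neg_sub, neg_sq]
    exact le_max_right _ _
  · simp

end CheckLoss

section Substitution

variable {E : Type*} [NormedAddCommGroup E]

lemma integral_comp_const_add_Ioi [NormedSpace ℝ E] (f : ℝ → E) (a b : ℝ) :
    ∫ x in Ioi b, f (a + x) = ∫ x in Ioi (a + b), f x := by
  simpa [preimage_const_add_Ioi] using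
    (measurePreserving_add_left volume a).setIntegral_preimage_emb
      (Homeomorph.addLeft a).measurableEmbedding f (Ioi (a + b))

lemma integrableOn_comp_const_add_Ioi {f : ℝ → E} {a b : ℝ} (hf : IntegrableOn f (Ioi (a + b))) :
    IntegrableOn (fun x => f (a + x)) (Ioi b) := by
  simpa [preimage_const_add_Ioi, Function.comp_def] using
    ((measurePreserving_add_left volume a).integrableOn_comp_preimage
      (Homeomorph.addLeft a).measurableEmbedding).2 hf

lemma integrableOn_comp_neg_Iic {f : ℝ → E} {c : ℝ} (hf : IntegrableOn f (Ioi c)) :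
    IntegrableOn (fun x => f (-x)) (Iic (-c)) := by
  rw [← integrableOn_Ici_iff_integrableOn_Ioi] at hf
  simpa [Function.comp_def] using
    ((Measure.measurePreserving_neg volume).integrableOn_comp_preimage
      (Homeomorph.neg ℝ).measurableEmbedding).2 hf

variable {τ : ℝ}

theorem integrable_comp_checkLoss_and_integral_eq [NormedSpace ℝ E] {F : ℝ → E}
    (hF : IntegrableOn F (Ioi 0)) (hτ0 : 0 < τ) (hτ1 : τ < 1) :
    Integrable (fun y => F (checkLoss τ y)) ∧
      ∫ y, F (checkLoss τ y) = (τ⁻¹ + (1 - τ)⁻¹) • ∫ x in Ioi 0, F x := by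
  have h1τ : 0 < 1 - τ := sub_pos.2 hτ1
  have hleft : EqOn (fun y => F (checkLoss τ y)) (fun y => F ((1 - τ) * -y)) (Iic 0) :=
    fun y hy => by simp only [checkLoss_of_nonpos hy]
  have hright : EqOn (fun y => F (checkLoss τ y)) (fun y => F (τ * y)) (Ioi 0) :=
    fun y hy => by simp only [checkLoss_of_nonneg (le_of_lt hy)]
  have hFl : IntegrableOn (fun y => F ((1 - τ) * y)) (Ioi 0) :=
    (integrableOn_Ioi_comp_mul_left_iff F 0 h1τ).2 (by simpa using hF)
  have hFr : IntegrableOn (fun y => F (τ * y)) (Ioi 0) :=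
    (integrableOn_Ioi_comp_mul_left_iff F 0 hτ0).2 (by simpa using hF)
  have hIl : IntegrableOn (fun y => F (checkLoss τ y)) (Iic 0) :=
    (neg_zero (G := ℝ) ▸ integrableOn_comp_neg_Iic hFl).congr_fun hleft.symm measurableSet_Iic
  have hIr : IntegrableOn (fun y => F (checkLoss τ y)) (Ioi 0) :=
    hFr.congr_fun hright.symm measurableSet_Ioi
  refine ⟨by simpa [Iic_union_Ioi] using hIl.union hIr, ?_⟩
  rw [← intervalIntegral.integral_Iic_add_Ioi hIl hIr,
    setIntegral_congr_fun measurableSet_Iic hleft, setIntegral_congr_fun measurableSet_Ioi hright,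
    integral_comp_neg_Iic (f := fun y => F ((1 - τ) * y)),
    integral_comp_mul_left_Ioi F _ h1τ, integral_comp_mul_left_Ioi F _ hτ0]
  simp [add_smul, add_comm]

end Substitution

section IncompleteGamma

lemma integrableOn_rpow_mul_exp_neg_Ioi {t k : ℝ} (ht : -1 < t) (hk : 0 ≤ k) :
    IntegrableOn (fun x => x ^ t * exp (-x)) (Ioi k) := by
  have h := (GammaIntegral_convergent (by linarith : 0 < t + 1)).mono_set (Ioi_subset_Ioi hk)
  simpa [mul_comm] using h

lemma uiGamma_add_one (t k : ℝ) : uiGamma (t + 1) k = ∫ x in Ioi k, x ^ t * exp (-x) := by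
  simp [uiGamma]

lemma uiGamma_pos {t k : ℝ} (ht : 0 < t) (hk : 0 ≤ k) : 0 < uiGamma t k := by
  have hpos : ∀ x ∈ Ioi k, 0 < x ^ (t - 1) * exp (-x) := fun x hx => by
    have := hk.trans_lt hx
    positivity
  have hint := integrableOn_rpow_mul_exp_neg_Ioi (by linarith : -1 < t - 1) hk
  rw [uiGamma, setIntegral_pos_iff_support_of_nonneg_ae
    (ae_restrict_of_forall_mem measurableSet_Ioi fun x hx => (hpos x hx).le) hint,
    inter_eq_right.2 (show Ioi k ⊆ Function.support _ from fun x hx => (hpos x hx).ne'),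
    volume_Ioi]
  exact ENNReal.zero_lt_top

lemma hasDerivAt_rpow_mul_exp_neg (a : ℝ) {x : ℝ} (hx : 0 < x) :
    HasDerivAt (fun x => x ^ a * exp (-x)) ((a / x - 1) * (x ^ a * exp (-x))) x := by
  refine ((hasDerivAt_rpow_const (Or.inl hx.ne')).mul (hasDerivAt_neg x).exp).congr_deriv ?_
  rw [rpow_sub_one hx.ne']
  field_simp
  ring

end IncompleteGamma

section Density

variable {α τ : ℝ}

noncomputable def acdtgScore (α τ y : ℝ) : ℝ := (α / (α + checkLoss τ y) - 1) * checkLossDeriv τ y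

lemma acdtgDensity_pos (hα : 0 < α) (hτ0 : 0 < τ) (hτ1 : τ < 1) (y : ℝ) :
    0 < acdtgDensity α τ y := by
  have hρ := checkLoss_nonneg hτ0.le hτ1.le y
  have hΓ := uiGamma_pos (by linarith : 0 < α + 1) hα.le
  have h1τ : 0 < 1 - τ := sub_pos.2 hτ1
  unfold acdtgDensity
  positivity

@[fun_prop]
lemma measurable_acdtgDensity (α τ : ℝ) : Measurable (acdtgDensity α τ) := by
  have := measurable_checkLoss τ
  unfold acdtgDensity
  fun_prop

@[fun_prop]
lemma measurable_acdtgScore (α τ : ℝ) : Measurable (acdtgScore α τ) := by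
  have := measurable_checkLoss τ
  have := measurable_checkLossDeriv τ
  unfold acdtgScore
  fun_prop

theorem integrable_acdtgDensity_and_integral_eq_one (hα : 0 < α) (hτ0 : 0 < τ) (hτ1 : τ < 1) :
    Integrable (acdtgDensity α τ) ∧ ∫ y, acdtgDensity α τ y = 1 := by
  set c := τ * (1 - τ) / uiGamma (α + 1) α with hc
  set F : ℝ → ℝ := fun x => c * ((α + x) ^ α * exp (-(α + x)))
  have hf := integrableOn_rpow_mul_exp_neg_Ioi (t := α) (by linarith) hα.le
  have hF : IntegrableOn F (Ioi 0) :=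
    (integrableOn_comp_const_add_Ioi (f := fun x => x ^ α * exp (-x)) (b := 0)
      (by rwa [add_zero])).const_mul c
  have hFint : ∫ x in Ioi 0, F x = c * uiGamma (α + 1) α := by
    simp only [F, integral_const_mul, integral_comp_const_add_Ioi (fun x => x ^ α * exp (-x)),
      add_zero, uiGamma_add_one]
  have hg : acdtgDensity α τ = fun y => F (checkLoss τ y) := by
    funext y
    simp only [acdtgDensity, F, hc, mul_assoc]
  obtain ⟨hint, hval⟩ := integrable_comp_checkLoss_and_integral_eq hF hτ0 hτ1
  refine ⟨hg ▸ hint, ?_⟩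
  have hΓ := uiGamma_pos (by linarith : 0 < α + 1) hα.le
  have h1τ : 0 < 1 - τ := sub_pos.2 hτ1
  rw [hg, hval, hFint, smul_eq_mul, hc]
  field_simp
  ring

lemma hasDerivAt_acdtgDensity (hα : 0 < α) (hτ0 : 0 ≤ τ) (hτ1 : τ ≤ 1) {y : ℝ} (hy : y ≠ 0) :
    HasDerivAt (acdtgDensity α τ) (acdtgScore α τ y * acdtgDensity α τ y) y := by
  have hx : 0 < α + checkLoss τ y := by linarith [checkLoss_nonneg hτ0 hτ1 y]
  have h := ((hasDerivAt_rpow_mul_exp_neg α hx).comp y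
    ((hasDerivAt_checkLoss hy).const_add α)).const_mul (τ * (1 - τ) / uiGamma (α + 1) α)
  refine (h.congr_deriv ?_).congr_of_eventuallyEq (Filter.Eventually.of_forall fun z => ?_)
  · simp only [acdtgScore, acdtgDensity]
    ring
  · simp only [acdtgDensity, Function.comp_apply, mul_assoc]

lemma sq_acdtgScore_le (hα : 0 < α) (hτ0 : 0 ≤ τ) (hτ1 : τ ≤ 1) (y : ℝ) :
    acdtgScore α τ y ^ 2 ≤ max (τ ^ 2) ((1 - τ) ^ 2) := by
  have hρ := checkLoss_nonneg hτ0 hτ1 y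
  have hr0 : 0 < α / (α + checkLoss τ y) := by positivity
  have hr1 : α / (α + checkLoss τ y) ≤ 1 := div_le_one_of_le₀ (by linarith) (by positivity)
  calc acdtgScore α τ y ^ 2
      = (α / (α + checkLoss τ y) - 1) ^ 2 * checkLossDeriv τ y ^ 2 := mul_pow _ _ _
    _ ≤ 1 * max (τ ^ 2) ((1 - τ) ^ 2) :=
        mul_le_mul (by nlinarith) (sq_checkLossDeriv_le τ y) (sq_nonneg _) zero_le_one
    _ = max (τ ^ 2) ((1 - τ) ^ 2) := one_mul _

end Density

section Hellinger

variable {α τ : ℝ} {gdot : ℝ → ℝ}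

lemma sq_acdtgXi_eq (hα : 0 < α) (hτ0 : 0 < τ) (hτ1 : τ < 1) {η y : ℝ}
    (h : gdot (y - η) = acdtgScore α τ (y - η) * acdtgDensity α τ (y - η)) :
    acdtgXi α τ gdot η y ^ 2 = acdtgScore α τ (y - η) ^ 2 * acdtgDensity α τ (y - η) / 4 := by
  have hg := acdtgDensity_pos hα hτ0 hτ1 (y - η)
  simp only [acdtgXi, if_pos hg, h]
  rw [div_pow, sq_sqrt hg.le]
  field_simp
  ring

lemma sq_acdtgXi_ae_eq (hα : 0 < α) (hτ0 : 0 < τ) (hτ1 : τ < 1)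
    (hgdot : ∀ᵐ y : ℝ, HasDerivAt (acdtgDensity α τ) (gdot y) y) (η : ℝ) :
    (fun y => acdtgXi α τ gdot η y ^ 2) =ᵐ[volume]
      fun y => acdtgScore α τ (y - η) ^ 2 * acdtgDensity α τ (y - η) / 4 := by
  have hscore : ∀ᵐ y : ℝ, gdot y = acdtgScore α τ y * acdtgDensity α τ y := by
    filter_upwards [hgdot, Measure.ae_ne volume 0] with y hy hy0
    exact hy.unique (hasDerivAt_acdtgDensity hα hτ0.le hτ1.le hy0)
  filter_upwards [(measurePreserving_sub_right volume η).quasiMeasurePreserving.ae hscore]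
    with y hy
  exact sq_acdtgXi_eq hα hτ0 hτ1 hy

end Hellinger

/-- for the ACDTG location family with shape `α > 0`, the squared `L²` norm
of the candidate location Hellinger derivative is bounded by `max{τ², (1-τ)²}/2`; in
particular it is square integrable. -/
theorem acdtg_hellinger_derivative_bound
    (α τ : ℝ) (hα : 0 < α) (hτ0 : 0 < τ) (hτ1 : τ < 1)
    (gdot : ℝ → ℝ)
    (hgdot : ∀ᵐ y : ℝ, HasDerivAt (acdtgDensity α τ) (gdot y) y) :
    ∀ η : ℝ,
      (∫ y, (acdtgXi α τ gdot η y) ^ 2) ≤ max (τ ^ 2) ((1 - τ) ^ 2) / 2 ∧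
      Integrable (fun y => (acdtgXi α τ gdot η y) ^ 2) := by
  intro η
  set M := max (τ ^ 2) ((1 - τ) ^ 2)
  set E : ℝ → ℝ := fun y => acdtgScore α τ (y - η) ^ 2 * acdtgDensity α τ (y - η) / 4
  have hxi := sq_acdtgXi_ae_eq hα hτ0 hτ1 hgdot η
  obtain ⟨hg, hg1⟩ := integrable_acdtgDensity_and_integral_eq_one hα hτ0 hτ1
  have hG : Integrable fun y => M / 4 * acdtgDensity α τ (y - η) :=
    (hg.comp_sub_right η).const_mul _
  have hEle : ∀ y, ‖E y‖ ≤ M / 4 * acdtgDensity α τ (y - η) := fun y => by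
    have hg0 := (acdtgDensity_pos hα hτ0 hτ1 (y - η)).le
    have := mul_le_mul_of_nonneg_right (sq_acdtgScore_le hα hτ0.le hτ1.le (y - η)) hg0
    simp only [E]
    rw [Real.norm_of_nonneg (by positivity)]
    linarith
  have hE : Integrable E := hG.mono' (by fun_prop) (ae_of_all _ hEle)
  refine ⟨?_, hE.congr hxi.symm⟩
  calc ∫ y, acdtgXi α τ gdot η y ^ 2 = ∫ y, E y := integral_congr_ae hxi
    _ ≤ ∫ y, M / 4 * acdtgDensity α τ (y - η) :=
        integral_mono hE hG fun y => (Real.le_norm_self _).trans (hEle y)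
    _ = M / 4 := by rw [integral_const_mul, integral_sub_right_eq_self, hg1, mul_one]
    _ ≤ M / 2 := by linarith [(sq_nonneg τ).trans (le_max_left _ ((1 - τ) ^ 2))]
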